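/- Let P be a right-side-up equilateral triangle in the triangular lattice tiled by valid puzzle pieces (in any orientations) with matching labels on shared edges, and let u, v, w be the strings of labels on its left, right, and bottom border segments read left to right. If u and v are 012-strings for Fl(a,b;n) (each having exactly a zeros, b−a ones, and n−b twos), then w is also a 012-string for Fl(a,b;n); in particular, every label of w is simple. -/

import Mathlib

/-!
STATEMENT 14: Let P be a right-side-up equilateral triangle of size n in
the triangular lattice, tiled by valid puzzle pieces (triangular or
equivariant, in any orientations) with matching labels on shared edges.
If the strings of labels on the left and right border segments are
012-strings for Fl(a,b;n), then so is the string on the bottom border;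
in particular every label of the bottom border is simple.
-/

set_option maxHeartbeats 1000000

open scoped Classical

/-- Puzzle labels are encoded as natural numbers; the meaningful ones are
0–7, and 0, 1, 2 are the *simple* labels. -/
abbrev Label := ℕ

/-- The valid upward triangular puzzle pieces in standard position,
as (left, right, bottom) label triples. -/
def basePieces : List (Label × Label × Label) :=
  [(0,0,0), (1,1,1), (2,2,2), (0,1,3), (1,2,4), (0,2,5), (3,2,6), (0,4,7)]

/-- Valid upward triangular pieces: the base list together with its
120° and 240° rotations. -/
def ValidUp (l r b : Label) : Prop :=
  (l, r, b) ∈ basePieces ∨ (r, b, l) ∈ basePieces ∨ (b, l, r) ∈ basePieces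

/-- Valid downward triangular pieces, with (left, right, top) labels:
precisely the rotations (by 60°, 180° or 300°) of valid upward pieces. -/
def ValidDown (l r t : Label) : Prop := ValidUp r l t

/-- Valid *vertical* equivariant (rhombus) puzzle pieces: opposite sides
carry equal labels, and `ValidEquivVert p q` means that the NW and SE sides
carry `p` while the NE and SW sides carry `q`, where `(p, q)` runs through
the paper's list of label pairs in its fixed orientation. -/
def ValidEquivVert (p q : Label) : Prop :=
  (p, q) ∈ ([(0,1), (1,2), (0,2), (2,3), (0,4), (3,4), (0,6), (2,7)] :
    List (Label × Label))

/-- `s` (restricted to indices `0, …, n-1`) is a 012-string for `Fl(a,b;n)`: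
exactly `a` zeros, `b - a` ones and `n - b` twos. -/
def Is012 (n a b : ℕ) (s : ℕ → ℕ) : Prop :=
  (∀ i, i < n → s i < 3) ∧
  ((Finset.range n).filter fun i => s i = 0).card = a ∧
  ((Finset.range n).filter fun i => s i = 1).card = b - a ∧
  ((Finset.range n).filter fun i => s i = 2).card = n - b

/-- A triangle of size `n` tiled by valid puzzle pieces in arbitrary
orientations.  Upward cells `(x, y)` (with `x + y < n`) have left side
`ne x y`, right side `nw x y` and bottom side `hl x y`; downward cells
`(x, y)` (with `x + y + 1 < n`) have left side `nw x y`, right side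
`ne (x+1) y` and top side `hl x (y+1)`.  `rh x y = some 0/1/2` records that
the upward cell `(x, y)` is merged with the downward neighbor across its
left/right/bottom side into an equivariant rhombus piece (whose internal
edge disappears, and whose opposite sides must carry equal labels and form
a valid equivariant piece in the corresponding rotation); `rh x y = none`
means the cell is a triangular piece.  Every downward cell is claimed by at
most one merge, and unclaimed downward cells are valid downward triangles.
The left, right and bottom border segments are `ne 0 i`, `nw i (n-1-i)`
and `hl i 0` for `i < n`. -/
structure GenPuzzle (n : ℕ) where
  ne : ℕ → ℕ → Label
  nw : ℕ → ℕ → Label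
  hl : ℕ → ℕ → Label
  rh : ℕ → ℕ → Option (Fin 3)
  rh_left : ∀ x y, rh x y = some 0 → 1 ≤ x ∧ x + y < n ∧
    nw (x-1) y = nw x y ∧ hl (x-1) (y+1) = hl x y ∧
    ValidEquivVert (nw x y) (hl x y)
  rh_right : ∀ x y, rh x y = some 1 → x + y + 1 < n ∧
    hl x (y+1) = hl x y ∧ ne (x+1) y = ne x y ∧
    ValidEquivVert (hl x y) (ne x y)
  rh_bottom : ∀ x y, rh x y = some 2 → 1 ≤ y ∧ x + y < n ∧
    ne x y = ne (x+1) (y-1) ∧ nw x y = nw x (y-1) ∧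
    ValidEquivVert (ne x y) (nw x y)
  up_tri : ∀ x y, x + y < n → rh x y = none →
    ValidUp (ne x y) (nw x y) (hl x y)
  dn_tri : ∀ x y, x + y + 1 < n →
    ¬ (rh x y = some 1) → ¬ (rh (x+1) y = some 0) → ¬ (rh x (y+1) = some 2) →
    ValidDown (nw x y) (ne (x+1) y) (hl x (y+1))
  dn_once : ∀ x y, x + y + 1 < n →
    (rh x y = some 1 → rh (x+1) y ≠ some 0 ∧ rh x (y+1) ≠ some 2) ∧
    (rh (x+1) y = some 0 → rh x (y+1) ≠ some 2)
  rh_in : ∀ x y, ¬ x + y < n → rh x y = none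

/-!
Weight the labels by one function per edge direction, `gL`, `gR`, `gB`, such that every upward
piece has total weight zero. Downward pieces are rotated upward ones, so they have total weight
zero too, and the two halves of a rhombus have equal weight because its opposite sides carry
equal labels. Hence the upward cells and the downward cells have the same total weight; as
every interior edge lies on exactly one cell of each kind, the weights along the three borders
add up to zero (a discrete Green's theorem). The left and right borders have the same label
counts, so for weights with `gL + gR = -gB` on simple labels the bottom border carries the same
`gB`-weight as the left one. With `gB` nonnegative and vanishing exactly on the simple labels
this makes every bottom label simple; with `gB` the indicator of `k` on simple labels it shows
that `k` occurs equally often on the bottom and on the left border.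
-/

open Finset

namespace Finset.Nat

variable {M : Type*} [AddCommMonoid M]

theorem sum_range_succ_sum_antidiagonal (f : ℕ × ℕ → M) (n : ℕ) :
    ∑ k ∈ range (n + 1), ∑ p ∈ antidiagonal k, f p =
      ∑ k ∈ range (n + 1), f (0, k) +
        ∑ k ∈ range n, ∑ p ∈ antidiagonal k, f (p.1 + 1, p.2) := by
  rw [sum_range_succ', sum_range_succ' (fun k => f (0, k))]
  simp only [sum_antidiagonal_succ, sum_add_distrib, antidiagonal_zero, sum_singleton]
  abel

theorem sum_range_succ_sum_antidiagonal' (f : ℕ × ℕ → M) (n : ℕ) :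
    ∑ k ∈ range (n + 1), ∑ p ∈ antidiagonal k, f p =
      ∑ k ∈ range (n + 1), f (k, 0) +
        ∑ k ∈ range n, ∑ p ∈ antidiagonal k, f (p.1, p.2 + 1) := by
  rw [sum_range_succ', sum_range_succ' (fun k => f (k, 0))]
  simp only [sum_antidiagonal_succ', sum_add_distrib, antidiagonal_zero, sum_singleton]
  abel

end Finset.Nat

theorem sum_comp_eq_sum_card_nsmul {M : Type*} [AddCommMonoid M] {n m : ℕ} {s : ℕ → ℕ}
    (hs : ∀ i < n, s i < m) (g : ℕ → M) :
    ∑ i ∈ range n, g (s i) = ∑ k ∈ range m, #{i ∈ range n | s i = k} • g k := by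
  rw [← sum_fiberwise_of_maps_to (t := range m) fun i hi => mem_range.2 (hs i (mem_range.1 hi))]
  refine sum_congr rfl fun k _ => ?_
  rw [sum_congr rfl fun i hi => congrArg g (mem_filter.1 hi).2, sum_const]

theorem Is012.sum_comp {M : Type*} [AddCommMonoid M] {n a b : ℕ} {s : ℕ → ℕ}
    (h : Is012 n a b s) (g : ℕ → M) :
    ∑ i ∈ range n, g (s i) = a • g 0 + (b - a) • g 1 + (n - b) • g 2 := by
  obtain ⟨hs, h0, h1, h2⟩ := h
  rw [sum_comp_eq_sum_card_nsmul hs, sum_range_succ, sum_range_succ, sum_range_one, h0, h1, h2]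

def IsConservationLaw {M : Type*} [AddCommMonoid M] (gL gR gB : Label → M) : Prop :=
  ∀ l r b, ValidUp l r b → gL l + gR r + gB b = 0

theorem IsConservationLaw.of_basePieces {M : Type*} [AddCommMonoid M] {gL gR gB : Label → M}
    (h : ∀ t ∈ basePieces, gL t.1 + gR t.2.1 + gB t.2.2 = 0 ∧
      gL t.2.2 + gR t.1 + gB t.2.1 = 0 ∧ gL t.2.1 + gR t.2.2 + gB t.1 = 0) :
    IsConservationLaw gL gR gB := by
  rintro l r b (hb | hb | hb)
  · exact (h _ hb).1
  · exact (h _ hb).2.1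
  · exact (h _ hb).2.2

namespace GenPuzzle

variable {M : Type*} [AddCommGroup M] {n a b : ℕ} (P : GenPuzzle n) (gL gR gB : Label → M)

def upWeight (p : ℕ × ℕ) : M :=
  gL (P.ne p.1 p.2) + gR (P.nw p.1 p.2) + gB (P.hl p.1 p.2)

def downWeight (p : ℕ × ℕ) : M :=
  gL (P.ne (p.1 + 1) p.2) + gR (P.nw p.1 p.2) + gB (P.hl p.1 (p.2 + 1))

def mergedWeight (k : Fin 3) (p : ℕ × ℕ) : M :=
  if P.rh p.1 p.2 = some k then P.upWeight gL gR gB p else 0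

variable {P gL gR gB}

theorem mergedWeight_left_border (y : ℕ) : P.mergedWeight gL gR gB 0 (0, y) = 0 :=
  if_neg fun h => by simpa using (P.rh_left 0 y h).1

theorem mergedWeight_right_border {p : ℕ × ℕ} (hp : n ≤ p.1 + p.2 + 1) :
    P.mergedWeight gL gR gB 1 p = 0 :=
  if_neg fun h => by have := (P.rh_right p.1 p.2 h).1; omega

theorem mergedWeight_bottom_border (x : ℕ) : P.mergedWeight gL gR gB 2 (x, 0) = 0 :=
  if_neg fun h => by simpa using (P.rh_bottom x 0 h).1

theorem upWeight_eq_sum_mergedWeight (hg : IsConservationLaw gL gR gB) {p : ℕ × ℕ}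
    (hp : p.1 + p.2 < n) :
    P.upWeight gL gR gB p = P.mergedWeight gL gR gB 0 p + P.mergedWeight gL gR gB 1 p +
      P.mergedWeight gL gR gB 2 p := by
  rcases h : P.rh p.1 p.2 with _ | k
  · simpa [mergedWeight, upWeight, h] using hg _ _ _ (P.up_tri p.1 p.2 hp h)
  · fin_cases k <;> simp [mergedWeight, h]

theorem downWeight_eq_sum_mergedWeight (hg : IsConservationLaw gL gR gB) {p : ℕ × ℕ}
    (hp : p.1 + p.2 + 1 < n) :
    P.downWeight gL gR gB p = P.mergedWeight gL gR gB 0 (p.1 + 1, p.2) +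
      P.mergedWeight gL gR gB 1 p + P.mergedWeight gL gR gB 2 (p.1, p.2 + 1) := by
  obtain ⟨x, y⟩ := p
  obtain ⟨hexcl₁, hexcl₀⟩ := P.dn_once x y hp
  by_cases h₁ : P.rh x y = some 1
  · obtain ⟨h₀, h₂⟩ := hexcl₁ h₁
    obtain ⟨-, hhl, hne, -⟩ := P.rh_right x y h₁
    simp [mergedWeight, upWeight, downWeight, h₀, h₁, h₂, hhl, hne]
  by_cases h₀ : P.rh (x + 1) y = some 0
  · have h₂ := hexcl₀ h₀
    obtain ⟨-, -, hnw, hhl, -⟩ := P.rh_left (x + 1) y h₀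
    simp only [Nat.add_sub_cancel] at hnw hhl
    simp [mergedWeight, upWeight, downWeight, h₀, h₁, h₂, hnw, hhl]
  by_cases h₂ : P.rh x (y + 1) = some 2
  · obtain ⟨-, -, hne, hnw, -⟩ := P.rh_bottom x (y + 1) h₂
    simp only [Nat.add_sub_cancel] at hne hnw
    simp [mergedWeight, upWeight, downWeight, h₀, h₁, h₂, hne, hnw]
  · simpa [mergedWeight, downWeight, h₀, h₁, h₂] using
      hg _ _ _ (P.dn_tri x y hp h₁ h₀ h₂)

theorem sum_upWeight_eq_sum_downWeight {P : GenPuzzle (n + 1)}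
    (hg : IsConservationLaw gL gR gB) :
    ∑ k ∈ range (n + 1), ∑ p ∈ antidiagonal k, P.upWeight gL gR gB p =
      ∑ k ∈ range n, ∑ p ∈ antidiagonal k, P.downWeight gL gR gB p := by
  set m := P.mergedWeight gL gR gB
  calc ∑ k ∈ range (n + 1), ∑ p ∈ antidiagonal k, P.upWeight gL gR gB p
      = ∑ k ∈ range (n + 1), ∑ p ∈ antidiagonal k, m 0 p +
          ∑ k ∈ range (n + 1), ∑ p ∈ antidiagonal k, m 1 p +
          ∑ k ∈ range (n + 1), ∑ p ∈ antidiagonal k, m 2 p := by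
        simp only [← sum_add_distrib]
        refine sum_congr rfl fun k hk => sum_congr rfl fun p hp => ?_
        rw [mem_range] at hk
        rw [HasAntidiagonal.mem_antidiagonal] at hp
        exact upWeight_eq_sum_mergedWeight hg (by omega)
    _ = ∑ k ∈ range n, ∑ p ∈ antidiagonal k, m 0 (p.1 + 1, p.2) +
          ∑ k ∈ range n, ∑ p ∈ antidiagonal k, m 1 p +
          ∑ k ∈ range n, ∑ p ∈ antidiagonal k, m 2 (p.1, p.2 + 1) := by
        rw [Nat.sum_range_succ_sum_antidiagonal (m 0),
          sum_range_succ (fun k => ∑ p ∈ antidiagonal k, m 1 p) n,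
          sum_eq_zero (s := antidiagonal n) fun p hp =>
            mergedWeight_right_border (by rw [HasAntidiagonal.mem_antidiagonal.1 hp]),
          Nat.sum_range_succ_sum_antidiagonal' (m 2)]
        simp [m, mergedWeight_left_border, mergedWeight_bottom_border]
    _ = ∑ k ∈ range n, ∑ p ∈ antidiagonal k, P.downWeight gL gR gB p := by
        simp only [← sum_add_distrib]
        refine sum_congr rfl fun k hk => sum_congr rfl fun p hp => ?_
        rw [mem_range] at hk
        rw [HasAntidiagonal.mem_antidiagonal] at hp
        exact (downWeight_eq_sum_mergedWeight hg (by omega)).symm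

theorem sum_border_eq_zero (P : GenPuzzle n) (hg : IsConservationLaw gL gR gB) :
    ∑ i ∈ range n, gL (P.ne 0 i) + ∑ i ∈ range n, gR (P.nw i (n - 1 - i)) +
      ∑ i ∈ range n, gB (P.hl i 0) = 0 := by
  cases n with
  | zero => simp
  | succ n =>
    have hL := Nat.sum_range_succ_sum_antidiagonal (fun p => gL (P.ne p.1 p.2)) n
    have hR : ∑ k ∈ range (n + 1), ∑ p ∈ antidiagonal k, gR (P.nw p.1 p.2) =
        ∑ i ∈ range (n + 1), gR (P.nw i (n - i)) +
          ∑ k ∈ range n, ∑ p ∈ antidiagonal k, gR (P.nw p.1 p.2) := by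
      rw [sum_range_succ, Nat.sum_antidiagonal_eq_sum_range_succ (fun x y => gR (P.nw x y)),
        add_comm]
    have hB := Nat.sum_range_succ_sum_antidiagonal' (fun p => gB (P.hl p.1 p.2)) n
    have hsum := sum_upWeight_eq_sum_downWeight hg (P := P)
    simp only [upWeight, downWeight, sum_add_distrib, hL, hR, hB] at hsum
    simp only [Nat.add_sub_cancel]
    linear_combination (norm := abel) hsum

theorem sum_bottom_eq_sum_left (hu : Is012 n a b fun i => P.ne 0 i)
    (hv : Is012 n a b fun i => P.nw i (n - 1 - i)) (hg : IsConservationLaw gL gR gB)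
    (hLR : ∀ j < 3, gL j + gR j = -gB j) :
    ∑ i ∈ range n, gB (P.hl i 0) = ∑ i ∈ range n, gB (P.ne 0 i) := by
  have hright : ∑ i ∈ range n, gR (P.nw i (n - 1 - i)) = ∑ i ∈ range n, gR (P.ne 0 i) := by
    rw [hv.sum_comp, hu.sum_comp]
  have hleft : ∑ i ∈ range n, gL (P.ne 0 i) + ∑ i ∈ range n, gR (P.ne 0 i) =
      -∑ i ∈ range n, gB (P.ne 0 i) := by
    rw [← sum_add_distrib, ← sum_neg_distrib]
    exact sum_congr rfl fun i hi => hLR _ (hu.1 i (mem_range.1 hi))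
  have hborder := P.sum_border_eq_zero hg
  rw [hright, hleft] at hborder
  exact (neg_add_eq_zero.mp hborder).symm

theorem bottom_lt_three (hu : Is012 n a b fun i => P.ne 0 i)
    (hv : Is012 n a b fun i => P.nw i (n - 1 - i)) {i : ℕ} (hi : i < n) : P.hl i 0 < 3 := by
  -- The weights solve the linear system of `IsConservationLaw.of_basePieces`; no piece carries a
  -- label above 7, so `gB` is free to stay positive there.
  set gB : Label → ℤ := fun j => [0, 0, 0, 1, 1, 2, 2, 2].getD j 2
  have hB : ∀ j, 0 ≤ gB j ∧ (gB j = 0 → j < 3) := by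
    intro j
    rcases lt_or_ge j 8 with hj | hj
    · interval_cases j <;> decide
    · simp only [gB, List.getD_eq_default (l := [0, 0, 0, 1, 1, 2, 2, 2]) (d := (2 : ℤ)) hj]
      norm_num
  have hsum := P.sum_bottom_eq_sum_left hu hv (gB := gB)
    (gL := fun j => [-1, 0, 1, -1, 0, -1, 0, -2].getD j 0)
    (gR := fun j => [1, 0, -1, 0, -1, -1, -2, 0].getD j 0)
    (IsConservationLaw.of_basePieces (by decide)) (by decide)
  have hB0 : ∀ j < 3, gB j = 0 := by decide
  rw [sum_eq_zero fun j hj => hB0 _ (hu.1 j (mem_range.1 hj)),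
    sum_eq_zero_iff_of_nonneg fun j _ => (hB _).1] at hsum
  exact (hB _).2 (hsum i (mem_range.2 hi))

theorem card_bottom_eq_card_left (hu : Is012 n a b fun i => P.ne 0 i)
    (hv : Is012 n a b fun i => P.nw i (n - 1 - i)) {k : Label} (hk : k < 3) :
    #{i ∈ range n | P.hl i 0 = k} = #{i ∈ range n | P.ne 0 i = k} := by
  obtain ⟨gL, gR, gB, hg, hLR, hB⟩ : ∃ gL gR gB : Label → ℤ,
      IsConservationLaw gL gR gB ∧ (∀ j < 3, gL j + gR j = -gB j) ∧
        ∀ j < 3, gB j = if j = k then 1 else 0 := by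
    -- solutions of the same linear system, one for each simple label `k`
    interval_cases k
    · exact ⟨fun j => [-1, 0, 0, 0, 0, 0, 1, 0].getD j 0,
        fun j => [0, 0, 0, -1, 0, -1, -1, -1].getD j 0,
        fun j => [1, 0, 0, 1, 0, 1, 0, 1].getD j 0,
        .of_basePieces (by decide), by decide, by decide⟩
    · exact ⟨fun j => [0, 0, 0, -1, 1, 0, 0, 0].getD j 0,
        fun j => [0, -1, 0, 0, -1, 0, -1, -1].getD j 0,
        fun j => [0, 1, 0, 1, 0, 0, 1, 1].getD j 0,
        .of_basePieces (by decide), by decide, by decide⟩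
    · exact ⟨fun j => [0, 0, 0, 0, -1, -1, -1, -1].getD j 0,
        fun j => [0, 0, -1, 0, 0, 0, 0, 1].getD j 0,
        fun j => [0, 0, 1, 0, 1, 1, 1, 0].getD j 0,
        .of_basePieces (by decide), by decide, by decide⟩
  have hcount : ∀ s : ℕ → Label, (∀ i < n, s i < 3) →
      ∑ i ∈ range n, gB (s i) = #{i ∈ range n | s i = k} := fun s hs => by
    rw [← sum_boole]
    exact sum_congr rfl fun i hi => hB _ (hs i (mem_range.1 hi))
  have hsum := P.sum_bottom_eq_sum_left hu hv hg hLR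
  rw [hcount _ fun i => P.bottom_lt_three hu hv, hcount _ hu.1] at hsum
  exact_mod_cast hsum

end GenPuzzle

theorem bottom_border_is_012 (n a b : ℕ)
    (P : GenPuzzle n)
    (hu : Is012 n a b fun i => P.ne 0 i)
    (hv : Is012 n a b fun i => P.nw i (n - 1 - i)) :
    Is012 n a b fun i => P.hl i 0 :=
  ⟨fun _ hi => P.bottom_lt_three hu hv hi,
    (P.card_bottom_eq_card_left hu hv (by norm_num)).trans hu.2.1,
    (P.card_bottom_eq_card_left hu hv (by norm_num)).trans hu.2.2.1,
    (P.card_bottom_eq_card_left hu hv (by norm_num)).trans hu.2.2.2⟩
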